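/- arXiv:2204.09561 — 3 statements merged into one kernel-verified Lean document; each statement's English description precedes it below -/
import Mathlib

section
/- Let Q : [0,∞) → ℝ be positive, twice differentiable, satisfying Q'' + (1/r)Q' + (2/(p-2))Q^(p-1) - (2/(p-2))Q = 0 with Q'(0)=0 and Q(r), Q'(r) → 0 as r → ∞. Then Q(0) ≥ (p/2)^(1/(p-2)). -/
open Real Filter Set

/-!
For a solution of `Q'' + Q'/r + g(Q) = 0` and a primitive `G` of `g`, the energy
`E = ½ Q'² + G(Q)` satisfies `E' = -Q'²/r ≤ 0`, so `E(0) ≥ lim_{r→∞} E(r)`. With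
`G(q) = 2 q^p / (p (p-2)) - q² / (p-2)` the limit is `0` and `Q'(0) = 0`, so `G(Q(0)) ≥ 0`;
as `p (p-2) G(q) = q² (2 q^(p-2) - p)`, this says `Q(0)^(p-2) ≥ p/2`.
-/

section RadialEnergy

variable {G g Q : ℝ → ℝ}

noncomputable def radialEnergy (G Q : ℝ → ℝ) (r : ℝ) : ℝ :=
  1 / 2 * deriv Q r ^ 2 + G (Q r)

theorem hasDerivAt_radialEnergy {r : ℝ} (hr : 0 < r) (hG : HasDerivAt G (g (Q r)) (Q r))
    (hQ : DifferentiableAt ℝ Q r) (hQ' : DifferentiableAt ℝ (deriv Q) r)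
    (hODE : deriv (deriv Q) r + 1 / r * deriv Q r + g (Q r) = 0) :
    HasDerivAt (radialEnergy G Q) (-deriv Q r ^ 2 / r) r := by
  have h := ((hQ'.hasDerivAt.pow 2).const_mul (1 / 2 : ℝ)).add (hG.comp r hQ.hasDerivAt)
  refine h.congr_deriv ?_
  have hQ'' : deriv (deriv Q) r = -(1 / r * deriv Q r) - g (Q r) := by linarith
  rw [hQ'']
  field_simp
  ring

theorem antitoneOn_radialEnergy (hG : ∀ r, 0 ≤ r → HasDerivAt G (g (Q r)) (Q r))
    (hQ : ∀ r, 0 ≤ r → DifferentiableAt ℝ Q r)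
    (hQ' : ∀ r, 0 ≤ r → DifferentiableAt ℝ (deriv Q) r)
    (hODE : ∀ r, 0 < r → deriv (deriv Q) r + 1 / r * deriv Q r + g (Q r) = 0) :
    AntitoneOn (radialEnergy G Q) (Ici 0) := by
  have hderiv : ∀ r ∈ interior (Ici (0 : ℝ)),
      HasDerivAt (radialEnergy G Q) (-deriv Q r ^ 2 / r) r := by
    intro r hr
    rw [interior_Ici, mem_Ioi] at hr
    exact hasDerivAt_radialEnergy hr (hG r hr.le) (hQ r hr.le) (hQ' r hr.le) (hODE r hr)
  refine antitoneOn_of_hasDerivWithinAt_nonpos (convex_Ici 0) ?_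
    (fun r hr => (hderiv r hr).hasDerivWithinAt) ?_
  · intro r hr
    exact (((hQ' r hr).continuousAt.pow 2).const_mul _ |>.add
      ((hG r hr).continuousAt.comp (hQ r hr).continuousAt)).continuousWithinAt
  · intro r hr
    rw [interior_Ici, mem_Ioi] at hr
    exact div_nonpos_of_nonpos_of_nonneg (neg_nonpos.mpr (sq_nonneg _)) hr.le

theorem le_radialEnergy_zero_of_tendsto {L : ℝ}
    (hG : ∀ r, 0 ≤ r → HasDerivAt G (g (Q r)) (Q r))
    (hQ : ∀ r, 0 ≤ r → DifferentiableAt ℝ Q r)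
    (hQ' : ∀ r, 0 ≤ r → DifferentiableAt ℝ (deriv Q) r)
    (hODE : ∀ r, 0 < r → deriv (deriv Q) r + 1 / r * deriv Q r + g (Q r) = 0)
    (hlim : Tendsto (radialEnergy G Q) atTop (nhds L)) :
    L ≤ radialEnergy G Q 0 := by
  refine le_of_tendsto hlim ?_
  filter_upwards [eventually_ge_atTop 0] with r hr
  exact antitoneOn_radialEnergy hG hQ hQ' hODE self_mem_Ici hr hr

end RadialEnergy

section NLSPotential

variable {p : ℝ}

noncomputable def nlsPotential (p q : ℝ) : ℝ :=
  2 / (p * (p - 2)) * q ^ p - 1 / (p - 2) * q ^ 2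

theorem hasDerivAt_nlsPotential (hp : p ≠ 0) {q : ℝ} (hq : 0 < q) :
    HasDerivAt (nlsPotential p) (2 / (p - 2) * q ^ (p - 1) - 2 / (p - 2) * q) q := by
  have h := ((hasDerivAt_rpow_const (p := p) (Or.inl hq.ne')).const_mul (2 / (p * (p - 2)))).sub
    ((hasDerivAt_pow 2 q).const_mul (1 / (p - 2)))
  refine h.congr_deriv ?_
  field_simp
  ring

theorem continuousAt_nlsPotential_zero (hp : 0 < p) : ContinuousAt (nlsPotential p) 0 :=
  ((continuousAt_const.mul (continuousAt_id.rpow_const (Or.inr hp.le))).sub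
    (continuousAt_const.mul (continuousAt_id.pow 2)))

theorem nlsPotential_zero (hp : p ≠ 0) : nlsPotential p 0 = 0 := by
  simp [nlsPotential, zero_rpow hp]

theorem rpow_le_of_nlsPotential_nonneg (hp : 2 < p) {q : ℝ} (hq : 0 < q)
    (h : 0 ≤ nlsPotential p q) : (p / 2) ^ (1 / (p - 2)) ≤ q := by
  have hp2 : 0 < p - 2 := by linarith
  have hsplit : q ^ p = q ^ (p - 2) * q ^ 2 := by
    rw [← rpow_natCast q 2, ← rpow_add hq]
    norm_num
  have hfactor : q ^ 2 * (2 * q ^ (p - 2) - p) = p * (p - 2) * nlsPotential p q := by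
    rw [nlsPotential, hsplit]
    field_simp
  have hbracket : 0 ≤ 2 * q ^ (p - 2) - p :=
    nonneg_of_mul_nonneg_right (hfactor ▸ mul_nonneg (by positivity) h) (by positivity)
  have key : p / 2 ≤ q ^ (p - 2) := by linarith
  calc (p / 2) ^ (1 / (p - 2)) ≤ (q ^ (p - 2)) ^ (1 / (p - 2)) :=
        rpow_le_rpow (by positivity) key (by positivity)
    _ = q := by rw [← rpow_mul hq.le, mul_one_div_cancel hp2.ne', rpow_one]

end NLSPotential

theorem stmt1 (p : ℝ) (hp : 2 < p) (Q : ℝ → ℝ)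
    (hQpos : ∀ r : ℝ, 0 ≤ r → 0 < Q r)
    (hQdiff : ∀ r : ℝ, 0 ≤ r → DifferentiableAt ℝ Q r)
    (hQdiff2 : ∀ r : ℝ, 0 ≤ r → DifferentiableAt ℝ (deriv Q) r)
    (hODE : ∀ r : ℝ, 0 < r →
      deriv (deriv Q) r + (1 / r) * deriv Q r
        + (2 / (p - 2)) * Q r ^ (p - 1) - (2 / (p - 2)) * Q r = 0)
    (hQ'0 : deriv Q 0 = 0)
    (hQlim : Tendsto Q atTop (nhds 0))
    (hQ'lim : Tendsto (deriv Q) atTop (nhds 0)) :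
    (p / 2) ^ (1 / (p - 2)) ≤ Q 0 := by
  have hp0 : 0 < p := by linarith
  have hlim : Tendsto (radialEnergy (nlsPotential p) Q) atTop (nhds 0) := by
    have h := ((hQ'lim.pow 2).const_mul (1 / 2 : ℝ)).add
      ((continuousAt_nlsPotential_zero hp0).tendsto.comp hQlim)
    rwa [nlsPotential_zero hp0.ne', zero_pow two_ne_zero, mul_zero, add_zero] at h
  have hE0 := le_radialEnergy_zero_of_tendsto
    (g := fun q => 2 / (p - 2) * q ^ (p - 1) - 2 / (p - 2) * q)
    (fun r hr => hasDerivAt_nlsPotential hp0.ne' (hQpos r hr)) hQdiff hQdiff2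
    (fun r hr => by rw [← hODE r hr]; ring) hlim
  rw [radialEnergy, hQ'0, zero_pow two_ne_zero, mul_zero, zero_add] at hE0
  exact rpow_le_of_nlsPotential_nonneg hp (hQpos 0 le_rfl) hE0
end

section
/- Let X, Y be Banach spaces and f : X → Y a C¹ map. Suppose df(x₀) is invertible, and there exist κ < 1 and R > 0 such that ‖df(x₀)^{-1} ∘ df(x) − Id_X‖ ≤ κ for all x in the closed ball B(x₀, R). Then, setting r = (1−κ)R / ‖df(x₀)^{-1}‖, the closed ball B(f(x₀), r) in Y is contained in f(B(x₀, R)). -/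
/-!
Composing with `A⁻¹` turns `f` into a map `g = A⁻¹ ∘ f : X → X` whose derivative stays within `κ`
of the identity on `B(x₀, R)`, so by the mean value inequality `g - id` is `κ`-Lipschitz there.
For each target `z`, the map `x ↦ z - (g x - x)` is then a `κ`-contraction, and it maps `B(x₀, R)`
into itself as soon as `‖z - g x₀‖ ≤ (1 - κ) R`; its fixed point solves `g x = z`. Finally,
`A⁻¹` maps `B(f x₀, r)` into `B(g x₀, (1 - κ) R)` because `‖A⁻¹‖ r = (1 - κ) R`.
-/

open Metric Set

section

variable {𝕜 E F : Type*} [NontriviallyNormedField 𝕜]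
  [NormedAddCommGroup E] [NormedSpace 𝕜 E] [NormedAddCommGroup F] [NormedSpace 𝕜 F]

variable (𝕜 E) in
def ContinuousLinearMap.NonlinearRightInverse.id :
    (ContinuousLinearMap.id 𝕜 E).NonlinearRightInverse where
  toFun := _root_.id
  nnnorm := 1
  bound' _ := by simp
  right_inv' _ := rfl

theorem ApproximatesLinearOn.surjOn_closedBall_of_id [CompleteSpace E] {g : E → E} {s : Set E}
    {c : NNReal} (hg : ApproximatesLinearOn g (ContinuousLinearMap.id 𝕜 E) s c) {b : E} {ε : ℝ}
    (ε0 : 0 ≤ ε) (hε : closedBall b ε ⊆ s) :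
    SurjOn g (closedBall b ε) (closedBall (g b) ((1 - c) * ε)) := by
  simpa [ContinuousLinearMap.NonlinearRightInverse.id] using
    hg.surjOn_closedBall_of_nonlinearRightInverse
      (ContinuousLinearMap.NonlinearRightInverse.id 𝕜 E) ε0 hε

theorem Convex.approximatesLinearOn_of_norm_hasFDerivWithinAt_sub_le [NormedSpace ℝ E]
    [NormedSpace ℝ F] {f : E → F} {f' : E → E →L[ℝ] F} {φ : E →L[ℝ] F} {s : Set E} {c : NNReal}
    (hs : Convex ℝ s) (hf : ∀ x ∈ s, HasFDerivWithinAt f (f' x) s x)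
    (hbound : ∀ x ∈ s, ‖f' x - φ‖ ≤ c) :
    ApproximatesLinearOn f φ s c := fun _ hx _ hy =>
  hs.norm_image_sub_le_of_norm_hasFDerivWithin_le' hf hbound hy hx

theorem ContinuousLinearMap.mapsTo_closedBall_div_opNorm (L : E →L[𝕜] F) (y : E) {ρ : ℝ}
    (hρ : 0 ≤ ρ) : MapsTo L (closedBall y (ρ / ‖L‖)) (closedBall (L y) ρ) := by
  refine (L.lipschitz.mapsTo_closedBall y _).mono_right (closedBall_subset_closedBall ?_)
  rcases (norm_nonneg L).eq_or_lt with hL | hL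
  · simpa [← hL] using hρ
  · exact (mul_div_cancel₀ ρ hL.ne').le

end

theorem stmt5_general {X Y : Type*} [NormedAddCommGroup X] [NormedSpace ℝ X] [CompleteSpace X]
    [NormedAddCommGroup Y] [NormedSpace ℝ Y]
    (f : X → Y) (hf : ContDiff ℝ 1 f) (x₀ : X)
    (A : X ≃L[ℝ] Y)
    (κ R : ℝ) (hκ : κ < 1) (hR : 0 < R)
    (hbound : ∀ x ∈ closedBall x₀ R,
      ‖(A.symm : Y →L[ℝ] X).comp (fderiv ℝ f x) - ContinuousLinearMap.id ℝ X‖ ≤ κ) :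
    closedBall (f x₀) ((1 - κ) * R / ‖(A.symm : Y →L[ℝ] X)‖)
      ⊆ f '' closedBall x₀ R := by
  have hκ0 : 0 ≤ κ := (norm_nonneg _).trans (hbound x₀ (mem_closedBall_self hR.le))
  set g : X → X := fun x => A.symm (f x)
  have hg : ApproximatesLinearOn g (ContinuousLinearMap.id ℝ X) (closedBall x₀ R) ⟨κ, hκ0⟩ :=
    (convex_closedBall x₀ R).approximatesLinearOn_of_norm_hasFDerivWithinAt_sub_le
      (fun x _ => ((A.symm : Y →L[ℝ] X).hasFDerivAt.comp x
        (hf.differentiable one_ne_zero x).hasFDerivAt).hasFDerivWithinAt) hbound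
  have hsurj : SurjOn g (closedBall x₀ R) (closedBall (g x₀) ((1 - κ) * R)) :=
    hg.surjOn_closedBall_of_id hR.le subset_rfl
  intro y hy
  have hradius : 0 ≤ (1 - κ) * R := mul_nonneg (sub_nonneg.2 hκ.le) hR.le
  obtain ⟨x, hx, hgx⟩ :=
    hsurj ((A.symm : Y →L[ℝ] X).mapsTo_closedBall_div_opNorm (f x₀) hradius hy)
  exact ⟨x, hx, A.symm.injective hgx⟩

theorem stmt5 {X Y : Type*} [NormedAddCommGroup X] [NormedSpace ℝ X] [CompleteSpace X]
    [NormedAddCommGroup Y] [NormedSpace ℝ Y]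
    (f : X → Y) (hf : ContDiff ℝ 1 f) (x₀ : X)
    (A : X ≃L[ℝ] Y) (hA : (A : X →L[ℝ] Y) = fderiv ℝ f x₀)
    (κ R : ℝ) (hκ : κ < 1) (hR : 0 < R)
    (hbound : ∀ x ∈ closedBall x₀ R,
      ‖(A.symm : Y →L[ℝ] X).comp (fderiv ℝ f x) - ContinuousLinearMap.id ℝ X‖ ≤ κ) :
    closedBall (f x₀) ((1 - κ) * R / ‖(A.symm : Y →L[ℝ] X)‖)
      ⊆ f '' closedBall x₀ R :=
  stmt5_general f hf x₀ A κ R hκ hR hbound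
end

section
/- Let A be a compact self-adjoint operator on a separable real Hilbert space whose positive eigenvalues, listed in decreasing order, satisfy λ_n⁺ ≥ C δ^{-2}/n² for all n ≥ δ^{-1}, and whose negative eigenvalues satisfy λ_n⁻ ≥ −C'/n². Assume also all eigenvalues exceed −1/2 + ε₀ for some ε₀ > 0. Then ∏_n (1 + 2(1−η)λ_n)^{-1/2} ≤ C_η e^{-c_η δ^{-1}} for any fixed η ∈ (0,1), with constants independent of δ. -/
/-!
Every positive-eigenvalue factor is at most `1`, and the roughly `δ⁻¹` factors with index
between `δ⁻¹` and `2δ⁻¹` have eigenvalue at least `C / 16`, hence are at most a fixed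
`q = exp (-c) < 1`; so the positive part of the product is at most `q ^ δ⁻¹ = exp (-c / δ)`.
The negative-eigenvalue factors have bases in `(η, 1]`, where `-½ log x ≤ (1 - x) / (2η)`, and
`1 - x` is bounded by a multiple of `1 / n²`; so their product is bounded independently of `δ`.
-/

open Real Finset

section InfiniteProduct

variable {ι : Type*} {f : ι → ℝ}

lemma bddBelow_range_prod_of_nonneg (h0 : ∀ i, 0 ≤ f i) :
    BddBelow (Set.range fun s : Finset ι => ∏ i ∈ s, f i) :=
  ⟨0, by rintro _ ⟨s, rfl⟩; exact prod_nonneg fun i _ => h0 i⟩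

lemma hasProd_iInf_prod_of_nonneg_of_le_one (h0 : ∀ i, 0 ≤ f i) (h1 : ∀ i, f i ≤ 1) :
    HasProd f (⨅ s : Finset ι, ∏ i ∈ s, f i) :=
  tendsto_atTop_ciInf (prod_anti_set_of_le_one h0 h1) (bddBelow_range_prod_of_nonneg h0)

lemma tprod_le_pow_card_of_nonneg_of_le_one (h0 : ∀ i, 0 ≤ f i) (h1 : ∀ i, f i ≤ 1)
    (s : Finset ι) {q : ℝ} (hq : ∀ i ∈ s, f i ≤ q) : ∏' i, f i ≤ q ^ #s := by
  rw [(hasProd_iInf_prod_of_nonneg_of_le_one h0 h1).tprod_eq, ← prod_const]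
  exact (ciInf_le (bddBelow_range_prod_of_nonneg h0) s).trans
    (prod_le_prod (fun i _ => h0 i) hq)

lemma tprod_exp_le_exp_tsum {a b : ι → ℝ} (ha : ∀ i, 0 ≤ a i) (hab : ∀ i, a i ≤ b i)
    (hb : Summable b) : ∏' i, exp (a i) ≤ exp (∑' i, b i) := by
  have hs : Summable a := hb.of_nonneg_of_le ha hab
  calc ∏' i, exp (a i) = exp (∑' i, a i) := hs.hasSum.rexp.tprod_eq
    _ ≤ exp (∑' i, b i) := exp_le_exp.2 (hs.tsum_le_tsum hab hb)

end InfiniteProduct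

lemma neg_log_le_one_sub_div {a x : ℝ} (ha : 0 < a) (hax : a ≤ x) (hx1 : x ≤ 1) :
    -log x ≤ (1 - x) / a := by
  have hx : 0 < x := ha.trans_le hax
  calc -log x ≤ x⁻¹ - 1 := by linarith [one_sub_inv_le_log_of_pos hx]
    _ = (1 - x) / x := by field_simp
    _ ≤ (1 - x) / a := div_le_div_of_nonneg_left (by linarith) ha hax

lemma tprod_rpow_neg_half_le_exp_tsum {ι : Type*} {x b : ι → ℝ} {a : ℝ} (ha : 0 < a)
    (hax : ∀ i, a ≤ x i) (hx1 : ∀ i, x i ≤ 1) (hb : Summable b) (hxb : ∀ i, 1 - x i ≤ b i) :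
    ∏' i, x i ^ (-(1 / 2) : ℝ) ≤ exp (∑' i, b i / (2 * a)) := by
  have hx : ∀ i, x i ^ (-(1 / 2) : ℝ) = exp (-log (x i) / 2) := fun i => by
    rw [rpow_def_of_pos (ha.trans_le (hax i))]
    ring_nf
  simp_rw [hx]
  refine tprod_exp_le_exp_tsum (fun i => ?_) (fun i => ?_) (hb.div_const _)
  · linarith [log_nonpos (ha.le.trans (hax i)) (hx1 i)]
  · calc -log (x i) / 2 ≤ (1 - x i) / a / 2 := by
          gcongr; exact neg_log_le_one_sub_div ha (hax i) (hx1 i)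
      _ ≤ b i / a / 2 := by gcongr; exact hxb i
      _ = b i / (2 * a) := by ring

lemma mem_Icc_of_mem_Ico_ceil_inv {δ : ℝ} (hδ : 0 < δ) (hδ1 : δ ≤ 1) {n : ℕ}
    (hn : n ∈ Ico ⌈δ⁻¹⌉₊ (2 * ⌈δ⁻¹⌉₊)) : (n : ℝ) + 1 ∈ Set.Icc δ⁻¹ (4 * δ⁻¹) := by
  rw [mem_Ico] at hn
  have hlo : (⌈δ⁻¹⌉₊ : ℝ) ≤ n := by exact_mod_cast hn.1
  have hhi : (n : ℝ) + 1 ≤ 2 * ⌈δ⁻¹⌉₊ := by exact_mod_cast hn.2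
  have hceil : (⌈δ⁻¹⌉₊ : ℝ) < δ⁻¹ + 1 := Nat.ceil_lt_add_one (inv_nonneg.2 hδ.le)
  have hone : 1 ≤ δ⁻¹ := (one_le_inv₀ hδ).2 hδ1
  constructor <;> linarith [Nat.le_ceil δ⁻¹]

lemma tprod_rpow_neg_half_le_exp_neg_div {lp : ℕ → ℝ} {b C δ : ℝ} (hb : 0 ≤ b) (hC : 0 ≤ C)
    (hδ : 0 < δ) (hδ1 : δ ≤ 1) (hlp : ∀ n, 0 < lp n)
    (hp : ∀ n : ℕ, δ⁻¹ ≤ (n : ℝ) + 1 → C * δ ^ (-2 : ℤ) / ((n : ℝ) + 1) ^ 2 ≤ lp n) :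
    ∏' n, (1 + 2 * b * lp n) ^ (-(1 / 2) : ℝ) ≤ exp (-(log (1 + b * C / 8) / 2) / δ) := by
  set m := ⌈δ⁻¹⌉₊
  set c := log (1 + b * C / 8) / 2
  have hc : 0 ≤ c := div_nonneg (log_nonneg (by nlinarith)) zero_le_two
  have hbase : ∀ n, 1 ≤ 1 + 2 * b * lp n := fun n => by nlinarith [hlp n]
  have hwindow : ∀ n ∈ Ico m (2 * m), (1 + 2 * b * lp n) ^ (-(1 / 2) : ℝ) ≤ exp (-c) := by
    intro n hn
    obtain ⟨hlo, hhi⟩ := mem_Icc_of_mem_Ico_ceil_inv hδ hδ1 hn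
    have hlpn : C / 16 ≤ lp n := by
      refine le_trans ?_ (hp n hlo)
      rw [zpow_neg, zpow_ofNat, ← inv_pow, le_div_iff₀ (by positivity)]
      nlinarith [mul_le_mul hhi hhi (by positivity) (by positivity)]
    calc (1 + 2 * b * lp n) ^ (-(1 / 2) : ℝ) ≤ (1 + b * C / 8) ^ (-(1 / 2) : ℝ) :=
          rpow_le_rpow_of_nonpos (by positivity) (by nlinarith) (by norm_num)
      _ = exp (-c) := by
          rw [rpow_def_of_pos (by positivity)]
          congr 1
          ring
  have hm : δ⁻¹ ≤ m := Nat.le_ceil δ⁻¹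
  calc ∏' n, (1 + 2 * b * lp n) ^ (-(1 / 2) : ℝ) ≤ exp (-c) ^ #(Ico m (2 * m)) :=
        tprod_le_pow_card_of_nonneg_of_le_one (fun n => rpow_nonneg (by linarith [hbase n]) _)
          (fun n => rpow_le_one_of_one_le_of_nonpos (hbase n) (by norm_num)) _ hwindow
    _ = exp (-c * m) := by
        rw [Nat.card_Ico, ← exp_nat_mul, show 2 * m - m = m by omega]
        ring_nf
    _ ≤ exp (-c / δ) := by
        rw [div_eq_mul_inv]
        exact exp_le_exp.2 (by nlinarith)

theorem stmt17_general (ε₀ C C' : ℝ) (hε : 0 < ε₀) (hC : 0 < C)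
    (η : ℝ) (hη : 0 < η) (hη1 : η < 1) :
    ∃ cη > (0:ℝ), ∃ Cη > (0:ℝ), ∀ δ : ℝ, 0 < δ → δ ≤ 1 →
      ∀ lp lm : ℕ → ℝ,
        Antitone lp → Monotone lm →
        (∀ n, 0 < lp n) →
        (∀ n, -(1/2) + ε₀ < lm n ∧ lm n < 0) →
        (∀ n : ℕ, δ⁻¹ ≤ ((n : ℝ) + 1) → C * δ ^ (-2 : ℤ) / ((n : ℝ) + 1) ^ 2 ≤ lp n) →
        (∀ n : ℕ, -C' / ((n : ℝ) + 1) ^ 2 ≤ lm n) →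
        (∏' n : ℕ, (1 + 2 * (1 - η) * lp n) ^ (-(1/2) : ℝ)) *
            (∏' n : ℕ, (1 + 2 * (1 - η) * lm n) ^ (-(1/2) : ℝ))
          ≤ Cη * Real.exp (-cη / δ) := by
  have hη' : 0 < 1 - η := by linarith
  set b : ℕ → ℝ := fun n => 2 * (1 - η) * C' * (1 / ((n : ℝ) + 1) ^ 2)
  have hb : Summable b := by
    refine Summable.mul_left _ ?_
    exact_mod_cast (summable_nat_add_iff 1).2 (summable_one_div_nat_pow.2 one_lt_two)
  refine ⟨log (1 + (1 - η) * C / 8) / 2,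
    div_pos (log_pos (lt_add_of_pos_right _ (by positivity))) two_pos,
    exp (∑' n, b n / (2 * η)), exp_pos _, ?_⟩
  intro δ hδ hδ1 lp lm _ _ hlp hlm hp hm
  have hpos := tprod_rpow_neg_half_le_exp_neg_div hη'.le hC.le hδ hδ1 hlp hp
  have hneg : ∏' n, (1 + 2 * (1 - η) * lm n) ^ (-(1 / 2) : ℝ) ≤ exp (∑' n, b n / (2 * η)) := by
    refine tprod_rpow_neg_half_le_exp_tsum hη (fun n => ?_) (fun n => ?_) hb (fun n => ?_)
    · nlinarith [hlm n]
    · nlinarith [hlm n]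
    · calc 1 - (1 + 2 * (1 - η) * lm n) = 2 * (1 - η) * -lm n := by ring
        _ ≤ 2 * (1 - η) * (C' / ((n : ℝ) + 1) ^ 2) := by
            gcongr
            exact neg_le.1 (neg_div _ C' ▸ hm n)
        _ = b n := by ring
  calc _ ≤ exp (-(log (1 + (1 - η) * C / 8) / 2) / δ) * exp (∑' n, b n / (2 * η)) :=
        mul_le_mul hpos hneg (tprod_nonneg fun n => rpow_nonneg (by nlinarith [hlm n]) _)
          (exp_pos _).le
    _ = _ := mul_comm _ _

theorem stmt17 (ε₀ C C' : ℝ) (hε : 0 < ε₀) (hC : 0 < C) (hC' : 0 < C')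
    (η : ℝ) (hη : 0 < η) (hη1 : η < 1) :
    ∃ cη > (0:ℝ), ∃ Cη > (0:ℝ), ∀ δ : ℝ, 0 < δ → δ ≤ 1 →
      ∀ lp lm : ℕ → ℝ,
        Antitone lp → Monotone lm →
        (∀ n, 0 < lp n) →
        (∀ n, -(1/2) + ε₀ < lm n ∧ lm n < 0) →
        (∀ n : ℕ, δ⁻¹ ≤ ((n : ℝ) + 1) → C * δ ^ (-2 : ℤ) / ((n : ℝ) + 1) ^ 2 ≤ lp n) →
        (∀ n : ℕ, -C' / ((n : ℝ) + 1) ^ 2 ≤ lm n) →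
        (∏' n : ℕ, (1 + 2 * (1 - η) * lp n) ^ (-(1/2) : ℝ)) *
            (∏' n : ℕ, (1 + 2 * (1 - η) * lm n) ^ (-(1/2) : ℝ))
          ≤ Cη * Real.exp (-cη / δ) :=
  stmt17_general ε₀ C C' hε hC η hη hη1
end
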